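/- arXiv:2211.06065 — 7 statements merged into one kernel-verified Lean document; each statement's English description precedes it below -/
import Mathlib

section
/- Let (δ_t)_{t≥1} be a sequence of positive reals such that for some c > 0 and all t ≥ 1, δ_t − δ_{t+1} ≥ δ_t²/c. Then for all t ≥ 1, δ_t ≤ c / (t − 1 + c/δ_1). -/
theorem stmt_1 (δ : ℕ → ℝ) (c : ℝ) (hc : 0 < c)
    (hpos : ∀ t, 1 ≤ t → 0 < δ t)
    (hrec : ∀ t, 1 ≤ t → δ t - δ (t + 1) ≥ (δ t) ^ 2 / c) :
    ∀ t, 1 ≤ t → δ t ≤ c / ((t : ℝ) - 1 + c / δ 1) := by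
  have key : ∀ t : ℕ, 1 ≤ t → (t : ℝ) - 1 + c / δ 1 ≤ c / δ t := by
    intro t ht
    induction t with
    | zero => omega
    | succ n ih =>
      rcases Nat.lt_or_ge n 1 with h1 | h1
      · interval_cases n
        push_cast
        simp
      · have ihn := ih h1
        have ha := hpos n h1
        have hb := hpos (n + 1) (by omega)
        have hr := hrec n h1
        have hr' : δ n ^ 2 ≤ (δ n - δ (n + 1)) * c := (div_le_iff₀ hc).mp hr
        have hba : δ (n + 1) ≤ δ n := by nlinarith [sq_nonneg (δ n)]
        have step : c / δ n + 1 ≤ c / δ (n + 1) := by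
          rw [div_add' _ _ _ (ne_of_gt ha), div_le_div_iff₀ ha hb]
          nlinarith
        push_cast
        linarith
  intro t ht
  have hk := key t ht
  have ht' : (1 : ℝ) ≤ (t : ℝ) := by exact_mod_cast ht
  have hdp : 0 < (t : ℝ) - 1 + c / δ 1 := by
    have : 0 < c / δ 1 := div_pos hc (hpos 1 le_rfl)
    linarith
  have hδ := hpos t ht
  rw [le_div_iff₀ hdp]
  have : δ t * ((t : ℝ) - 1 + c / δ 1) ≤ δ t * (c / δ t) := by
    exact mul_le_mul_of_nonneg_left hk (le_of_lt hδ)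
  rw [mul_div_cancel₀ _ (ne_of_gt hδ)] at this
  exact this
end

section
/- Let f(x) = (1/η)·ln(Σ_{i=1}^m exp(−η(⟨α_i, x⟩ + b_i))) where each α_i ∈ [−U,U]^d. Then for all x, y ∈ ℝ^d, f(y) ≤ f(x) + ⟨∇f(x), y − x⟩ + U²η·‖y − x‖₁². (That is, f is 2U²η-smooth with respect to the ℓ₁-norm.) -/
/-!
Write `p` for the softmax weights of the exponents `φ i x = -η (⟪α i, x⟫ + b i)` and
`Z i = φ i y - φ i x = -η ⟪α i, y - x⟫`. Then `η (f y - f x) = log ∑ p i exp (Z i)` and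
`η ⟪∇f x, y - x⟫ = ∑ p i Z i`, so the claim is a bound on the cumulant generating function of a
random variable taking values in `[-M, M]`, `M = η U ‖y - x‖₁`. Hoeffding's lemma bounds it by
`(2M)² / 8`, which after dividing by `η` is half of the stated constant.
-/

open Real Finset MeasureTheory ProbabilityTheory

theorem Real.log_sum_mul_exp_le_of_mem_Icc {ι : Type*} [Fintype ι] {p Z : ι → ℝ} {a b : ℝ}
    (hp : ∀ i, 0 ≤ p i) (hp1 : ∑ i, p i = 1) (hZ : ∀ i, Z i ∈ Set.Icc a b) :
    log (∑ i, p i * exp (Z i)) ≤ ∑ i, p i * Z i + (b - a) ^ 2 / 8 := by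
  classical
  let _ : MeasurableSpace ι := ⊤
  -- Hoeffding's lemma for the discrete distribution with weights `p`.
  let μ : Measure ι := ∑ i, ENNReal.ofReal (p i) • Measure.dirac i
  have : IsProbabilityMeasure μ := ⟨by
    simp [μ, ← ENNReal.ofReal_sum_of_nonneg (fun i _ => hp i), hp1]⟩
  have hint (g : ι → ℝ) : ∫ i, g i ∂μ = ∑ i, p i * g i := by
    simp [integral_fintype Integrable.of_finite, μ, Measure.real, Set.indicator_apply, hp]
  set mean := ∑ i, p i * Z i
  set S := ∑ i, p i * exp (Z i - mean)
  have hoeffding : S ≤ exp ((b - a) ^ 2 / 8) := by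
    have := (hasSubgaussianMGF_of_mem_Icc (μ := μ) Measurable.of_discrete.aemeasurable
      (ae_of_all _ hZ)).mgf_le 1
    simp only [mgf, hint, one_mul, one_pow, mul_one] at this
    convert this using 2
    simp only [NNReal.coe_pow, NNReal.coe_div, NNReal.coe_ofNat, coe_nnnorm, Real.norm_eq_abs,
      div_pow, sq_abs]
    ring
  have hS : 0 < S := by
    obtain ⟨i, -, hi⟩ := Finset.exists_ne_zero_of_sum_ne_zero (hp1.trans_ne one_ne_zero)
    exact Finset.sum_pos' (fun i _ => by have := hp i; positivity)
      ⟨i, Finset.mem_univ i, mul_pos ((hp i).lt_of_ne' hi) (exp_pos _)⟩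
  have hsplit : ∑ i, p i * exp (Z i) = exp mean * S := by
    simp only [S, Finset.mul_sum, exp_sub]
    exact Finset.sum_congr rfl fun i _ => by field_simp
  rw [hsplit, log_mul (exp_pos _).ne' hS.ne', log_exp, add_le_add_iff_left]
  exact (log_le_iff_le_exp hS).2 hoeffding

section Softmax

variable {ι : Type*} [Fintype ι]

noncomputable def softmax (s : ι → ℝ) (i : ι) : ℝ := exp (s i) / ∑ j, exp (s j)

theorem softmax_nonneg (s : ι → ℝ) (i : ι) : 0 ≤ softmax s i := by
  unfold softmax; positivity

theorem sum_softmax [Nonempty ι] (s : ι → ℝ) : ∑ i, softmax s i = 1 := by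
  simp only [softmax, ← Finset.sum_div]
  exact div_self (Finset.sum_pos (fun i _ => exp_pos _) univ_nonempty).ne'

theorem log_sum_exp_le_of_sub_mem_Icc [Nonempty ι] {s t : ι → ℝ} {a b : ℝ}
    (h : ∀ i, t i - s i ∈ Set.Icc a b) :
    log (∑ i, exp (t i)) ≤
      log (∑ i, exp (s i)) + ∑ i, softmax s i * (t i - s i) + (b - a) ^ 2 / 8 := by
  have hpos : 0 < ∑ i, exp (s i) := Finset.sum_pos (fun i _ => exp_pos _) univ_nonempty
  have hsplit : ∑ i, exp (t i) = (∑ i, exp (s i)) * ∑ i, softmax s i * exp (t i - s i) := by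
    simp only [Finset.mul_sum, softmax, exp_sub]
    exact Finset.sum_congr rfl fun i _ => by field_simp
  have hmix : 0 < ∑ i, softmax s i * exp (t i - s i) :=
    Finset.sum_pos (fun i _ => by unfold softmax; positivity) univ_nonempty
  have hgap := log_sum_mul_exp_le_of_mem_Icc (softmax_nonneg s) (sum_softmax s) h
  rw [hsplit, log_mul hpos.ne' hmix.ne']
  linarith

variable {E : Type*} [NormedAddCommGroup E] [NormedSpace ℝ E]

theorem HasFDerivAt.log_sum_exp [Nonempty ι] {φ : ι → E → ℝ} {φ' : ι → E →L[ℝ] ℝ} {x : E}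
    (h : ∀ i, HasFDerivAt (φ i) (φ' i) x) :
    HasFDerivAt (fun y => Real.log (∑ i, Real.exp (φ i y)))
      (∑ i, softmax (φ · x) i • φ' i) x := by
  have hpos : 0 < ∑ i, Real.exp (φ i x) := Finset.sum_pos (fun i _ => exp_pos _) univ_nonempty
  convert (HasFDerivAt.fun_sum fun i _ => (h i).exp).log hpos.ne' using 1
  simp only [Finset.smul_sum, smul_smul, softmax, div_eq_inv_mul]

end Softmax

theorem EuclideanSpace.abs_inner_le_mul_sum_abs {ι : Type*} [Fintype ι]
    {u v : EuclideanSpace ℝ ι} {U : ℝ} (hu : ∀ j, |u j| ≤ U) :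
    |inner ℝ u v| ≤ U * ∑ j, |v j| := by
  rw [PiLp.inner_apply, Finset.mul_sum]
  refine (Finset.abs_sum_le_sum_abs _ _).trans (Finset.sum_le_sum fun j _ => ?_)
  rw [RCLike.inner_apply, conj_trivial, abs_mul, mul_comm]
  exact mul_le_mul_of_nonneg_right (hu j) (abs_nonneg _)

theorem stmt_2_general (η U : ℝ) (hη : 0 < η) (m d : ℕ) (hm : 0 < m)
    (α : Fin m → EuclideanSpace ℝ (Fin d)) (b : Fin m → ℝ)
    (hα : ∀ i j, |α i j| ≤ U)
    (f : EuclideanSpace ℝ (Fin d) → ℝ)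
    (hf : f = fun x => (1 / η) *
      Real.log (∑ i : Fin m, Real.exp (-η * ((inner ℝ (α i) x : ℝ) + b i))))
    (x y : EuclideanSpace ℝ (Fin d)) :
    f y ≤ f x + (inner ℝ (gradient f x) (y - x) : ℝ) +
      U ^ 2 * η * (∑ j, |y j - x j|) ^ 2 := by
  have : Nonempty (Fin m) := Fin.pos_iff_nonempty.mp hm
  let φ (i : Fin m) (z : EuclideanSpace ℝ (Fin d)) : ℝ := -η * (inner ℝ (α i) z + b i)
  have hφ (i : Fin m) : HasFDerivAt (φ i) ((-η) • innerSL ℝ (α i)) x :=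
    ((innerSL ℝ (α i)).hasFDerivAt.add_const (b i)).const_mul (-η)
  have hφ_sub (i : Fin m) : φ i y - φ i x = -η * inner ℝ (α i) (y - x) := by
    simp only [φ, inner_sub_right]; ring
  set σ := ∑ j, |y j - x j|
  have hstep (i : Fin m) : φ i y - φ i x ∈ Set.Icc (-(η * (U * σ))) (η * (U * σ)) := by
    rw [hφ_sub, Set.mem_Icc, ← abs_le, abs_mul, abs_neg, abs_of_pos hη]
    exact mul_le_mul_of_nonneg_left (EuclideanSpace.abs_inner_le_mul_sum_abs (hα i)) hη.le
  have hf' := (HasFDerivAt.log_sum_exp hφ).const_mul (1 / η)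
  subst hf
  rw [inner_gradient_left, hf'.fderiv]
  have hgrad : ((1 / η) • ∑ i, softmax (φ · x) i • (-η) • innerSL ℝ (α i)) (y - x) =
      1 / η * ∑ i, softmax (φ · x) i * (φ i y - φ i x) := by
    simp [hφ_sub]
  rw [hgrad]
  have hquad : 1 / η * ((η * (U * σ) - -(η * (U * σ))) ^ 2 / 8) = U ^ 2 * η * σ ^ 2 / 2 := by
    field_simp
    ring
  have hquad_nonneg : 0 ≤ U ^ 2 * η * σ ^ 2 := by positivity
  have hlse :=
    mul_le_mul_of_nonneg_left (log_sum_exp_le_of_sub_mem_Icc hstep) (one_div_pos.2 hη).le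
  rw [mul_add, mul_add] at hlse
  linarith

theorem stmt_2 (η U : ℝ) (hη : 0 < η) (hU : 0 < U) (m d : ℕ) (hm : 0 < m)
    (α : Fin m → EuclideanSpace ℝ (Fin d)) (b : Fin m → ℝ)
    (hα : ∀ i j, |α i j| ≤ U)
    (f : EuclideanSpace ℝ (Fin d) → ℝ)
    (hf : f = fun x => (1 / η) *
      Real.log (∑ i : Fin m, Real.exp (-η * ((inner ℝ (α i) x : ℝ) + b i))))
    (x y : EuclideanSpace ℝ (Fin d)) :
    f y ≤ f x + (inner ℝ (gradient f x) (y - x) : ℝ) +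
      U ^ 2 * η * (∑ j, |y j - x j|) ^ 2 :=
  stmt_2_general η U hη m d hm α b hα f hf x y
end

section
/- Let f(x) = (1/η)·ln(Σ_{i=1}^m exp(−η(⟨α_i, x⟩ + b_i))) with α_i ∈ [−U,U]^d and p_i(x) as in the softmax weights. Then for all x, z ∈ ℝ^d, the quadratic form of the Hessian satisfies xᵀ∇²f(z)x ≤ 2U²η‖x‖₁². -/
theorem stmt_4 (η U : ℝ) (hη : 0 < η) (hU : 0 < U) (m d : ℕ) (hm : 0 < m)
    (α : Fin m → Fin d → ℝ) (b : Fin m → ℝ)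
    (hα : ∀ i j, |α i j| ≤ U)
    (p : Fin m → (Fin d → ℝ) → ℝ)
    (hp : p = fun i z => Real.exp (-η * ((∑ j, α i j * z j) + b i)) /
      ∑ k : Fin m, Real.exp (-η * ((∑ j, α k j * z j) + b k)))
    (g : (Fin d → ℝ) → Fin d → ℝ)
    (hg : g = fun z j => -∑ i : Fin m, p i z * α i j)
    (x z : Fin d → ℝ) :
    η * (∑ i : Fin m, p i z * (∑ j, α i j * x j) ^ 2) +
        η * (∑ j, x j * g z j) ^ 2 ≤
      2 * U ^ 2 * η * (∑ j, |x j|) ^ 2 := by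
  set S := ∑ j, |x j| with hS
  have hSnn : 0 ≤ S := Finset.sum_nonneg fun j _ => abs_nonneg _
  have hden : 0 < ∑ k : Fin m, Real.exp (-η * ((∑ j, α k j * z j) + b k)) := by
    apply Finset.sum_pos (fun k _ => Real.exp_pos _)
    exact Finset.univ_nonempty_iff.mpr ⟨⟨0, hm⟩⟩
  have hpnn : ∀ i, 0 ≤ p i z := by
    intro i; rw [hp]; positivity
  have hpsum : ∑ i : Fin m, p i z = 1 := by
    rw [hp]
    simp only
    rw [← Finset.sum_div]
    exact div_self hden.ne'
  have hdot : ∀ i, |∑ j, α i j * x j| ≤ U * S := by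
    intro i
    calc |∑ j, α i j * x j| ≤ ∑ j, |α i j * x j| := Finset.abs_sum_le_sum_abs _ _
      _ ≤ ∑ j, U * |x j| := by
          apply Finset.sum_le_sum
          intro j _
          rw [abs_mul]
          exact mul_le_mul_of_nonneg_right (hα i j) (abs_nonneg _)
      _ = U * S := by rw [hS, Finset.mul_sum]
  have hsq : ∀ i, (∑ j, α i j * x j) ^ 2 ≤ (U * S) ^ 2 := by
    intro i
    rw [← sq_abs]
    exact pow_le_pow_left₀ (abs_nonneg _) (hdot i) 2
  have h1 : ∑ i : Fin m, p i z * (∑ j, α i j * x j) ^ 2 ≤ (U * S) ^ 2 := by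
    calc ∑ i : Fin m, p i z * (∑ j, α i j * x j) ^ 2
        ≤ ∑ i : Fin m, p i z * (U * S) ^ 2 :=
          Finset.sum_le_sum fun i _ => mul_le_mul_of_nonneg_left (hsq i) (hpnn i)
      _ = (U * S) ^ 2 := by rw [← Finset.sum_mul, hpsum, one_mul]
  have hgx : ∑ j, x j * g z j = -∑ i : Fin m, p i z * (∑ j, α i j * x j) := by
    rw [hg]
    simp only [mul_neg, Finset.sum_neg_distrib, Finset.mul_sum]
    rw [Finset.sum_comm]
    congr 1
    apply Finset.sum_congr rfl
    intro i _
    apply Finset.sum_congr rfl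
    intro j _
    ring
  have h2 : (∑ j, x j * g z j) ^ 2 ≤ (U * S) ^ 2 := by
    rw [hgx, neg_sq, ← sq_abs]
    apply pow_le_pow_left₀ (abs_nonneg _) _ 2
    calc |∑ i : Fin m, p i z * (∑ j, α i j * x j)|
        ≤ ∑ i : Fin m, |p i z * (∑ j, α i j * x j)| := Finset.abs_sum_le_sum_abs _ _
      _ ≤ ∑ i : Fin m, p i z * (U * S) := by
          apply Finset.sum_le_sum
          intro i _
          rw [abs_mul, abs_of_nonneg (hpnn i)]
          exact mul_le_mul_of_nonneg_left (hdot i) (hpnn i)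
      _ = U * S := by rw [← Finset.sum_mul, hpsum, one_mul]
  have : η * (∑ i : Fin m, p i z * (∑ j, α i j * x j) ^ 2) + η * (∑ j, x j * g z j) ^ 2
      ≤ η * (U * S) ^ 2 + η * (U * S) ^ 2 := by
    have := mul_le_mul_of_nonneg_left h1 hη.le
    have := mul_le_mul_of_nonneg_left h2 hη.le
    linarith
  calc _ ≤ η * (U * S) ^ 2 + η * (U * S) ^ 2 := this
    _ = 2 * U ^ 2 * η * S ^ 2 := by ring
end

section
/- Let F(x) = min_i (⟨α_i, x⟩ + b_i) and Θ(x) = −(1/η)·ln((1/m)·Σ_i exp(−η(⟨α_i, x⟩ + b_i))). If η ≥ (2/ε)·ln m, F* = sup F, and x₀ satisfies Θ(x₀) ≥ sup Θ − ε/2, then F(x₀) ≥ F* − ε. -/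
set_option maxHeartbeats 1000000


theorem stmt_6 (η ε : ℝ) (hη : 0 < η) (hε : 0 < ε) (m d : ℕ) [NeZero m]
    (α : Fin m → Fin d → ℝ) (b : Fin m → ℝ)
    (F Θ : (Fin d → ℝ) → ℝ)
    (hF : F = fun x => ⨅ i : Fin m, ((∑ j, α i j * x j) + b i))
    (hΘ : Θ = fun x => -(1 / η) *
      Real.log ((1 / (m : ℝ)) * ∑ i : Fin m, Real.exp (-η * ((∑ j, α i j * x j) + b i))))
    (hηbig : η ≥ (2 / ε) * Real.log m)
    (Fstar Θstar : ℝ)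
    (hFstar : IsLUB (Set.range F) Fstar)
    (hΘstar : IsLUB (Set.range Θ) Θstar)
    (x₀ : Fin d → ℝ) (hx₀ : Θ x₀ ≥ Θstar - ε / 2) :
    F x₀ ≥ Fstar - ε := by
  have hm : (0:ℝ) < m := by
    exact_mod_cast Nat.pos_of_ne_zero (NeZero.ne m)
  -- Sandwich: ∀ x, F x ≤ Θ x ∧ Θ x ≤ F x + log m / η
  have sandwich : ∀ x, F x ≤ Θ x ∧ Θ x ≤ F x + Real.log m / η := by
    intro x
    set f : Fin m → ℝ := fun i => (∑ j, α i j * x j) + b i with hf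
    obtain ⟨i₀, hi₀⟩ := Finite.exists_min f
    have hFx : F x = f i₀ := by
      rw [hF]
      exact le_antisymm (ciInf_le (Finite.bddBelow_range f) i₀) (le_ciInf hi₀)
    set S : ℝ := ∑ i : Fin m, Real.exp (-η * f i) with hS
    have hSpos : 0 < S := Finset.sum_pos (fun i _ => Real.exp_pos _) ⟨i₀, Finset.mem_univ i₀⟩
    have hSlb : Real.exp (-η * F x) ≤ S := by
      rw [hFx, hS]
      exact Finset.single_le_sum (f := fun i => Real.exp (-η * f i)) (fun i _ => (Real.exp_pos _).le) (Finset.mem_univ i₀)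
    have hSub : S ≤ (m : ℝ) * Real.exp (-η * F x) := by
      have : ∀ i ∈ Finset.univ, Real.exp (-η * f i) ≤ Real.exp (-η * F x) := by
        intro i _
        apply Real.exp_le_exp.2
        have : F x ≤ f i := hFx ▸ hi₀ i
        nlinarith
      calc S ≤ Finset.univ.card • Real.exp (-η * F x) :=
              Finset.sum_le_card_nsmul _ _ _ this
        _ = (m : ℝ) * Real.exp (-η * F x) := by
              simp [nsmul_eq_mul]
    have hΘx : Θ x = (Real.log m - Real.log S) / η := by
      rw [hΘ]
      simp only
      rw [← hS, Real.log_mul (by positivity) hSpos.ne', Real.log_div one_ne_zero hm.ne',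
        Real.log_one]
      field_simp
      ring
    have hlogS_ub : Real.log S ≤ Real.log m + (-η * F x) := by
      calc Real.log S ≤ Real.log ((m : ℝ) * Real.exp (-η * F x)) :=
            Real.log_le_log hSpos hSub
        _ = Real.log m + (-η * F x) := by rw [Real.log_mul hm.ne' (Real.exp_pos _).ne',
              Real.log_exp]
    have hlogS_lb : -η * F x ≤ Real.log S := by
      calc -η * F x = Real.log (Real.exp (-η * F x)) := (Real.log_exp _).symm
        _ ≤ Real.log S := Real.log_le_log (Real.exp_pos _) hSlb
    constructor
    · rw [hΘx]
      rw [le_div_iff₀ hη]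
      nlinarith
    · rw [hΘx]
      rw [div_le_iff₀ hη, add_mul, div_mul_cancel₀ _ hη.ne']
      nlinarith
  have hΘF : Fstar ≤ Θstar := by
    apply hFstar.2
    rintro _ ⟨x, rfl⟩
    exact (sandwich x).1.trans (hΘstar.1 ⟨x, rfl⟩)
  have hlogm : Real.log m / η ≤ ε / 2 := by
    rw [div_le_iff₀ hη]
    have h2 : (2 / ε) * Real.log m * ε ≤ η * ε := by
      apply mul_le_mul_of_nonneg_right hηbig hε.le
    have : (2 / ε) * Real.log m * ε = 2 * Real.log m := by field_simp
    nlinarith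
  have h1 := (sandwich x₀).2
  linarith
end

section
/- Let R(α) = −(1/η)·Σ_e d_e ((3+x_e)/6 · e^{−3ηα} + (3−x_e)/6 · e^{3ηα} − 1) with d_e ≥ 0, Σ_e d_e > 0, and x_e ∈ [−2,2] with Σ_e d_e x_e ≥ 0. Then the maximizer of R over ℝ is α* = (1/(6η))·ln(Σ_e d_e(3+x_e) / Σ_e d_e(3−x_e)), and α* ∈ [0, (1/(6η))·ln 5]. -/
/-!
Summing out the weights, `R α = (S - (P e^{-3ηα} + Q e^{3ηα}) / 6) / η` with `S = Σ d`,
`P = Σ d (3 + x)` and `Q = Σ d (3 - x)`. Maximising `R` thus means minimising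
`P e^{-t} + Q e^t`, and by AM–GM (`P/u + Q u - 2 √(PQ) = Q (u - v)² / u` with `v² = P/Q`)
the minimum is at `e^{2t} = P / Q`. Finally `1 ≤ P / Q ≤ 5` because `Σ d x ≥ 0` and `x ≤ 2`.
-/

open Real Finset

lemma mul_exp_neg_add_mul_exp_le {p q : ℝ} (hp : 0 < p) (hq : 0 < q) (t : ℝ) :
    p * exp (-(log (p / q) / 2)) + q * exp (log (p / q) / 2) ≤ p * exp (-t) + q * exp t := by
  have hv : 0 < exp (log (p / q) / 2) := exp_pos _
  have hu : 0 < exp t := exp_pos t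
  have hpv : p = q * exp (log (p / q) / 2) ^ 2 := by
    rw [← exp_nat_mul, Nat.cast_ofNat, mul_div_cancel₀ _ two_ne_zero, exp_log (div_pos hp hq),
      mul_div_cancel₀ _ hq.ne']
  rw [exp_neg, exp_neg, ← sub_nonneg]
  generalize exp (log (p / q) / 2) = v at hv hpv ⊢
  generalize exp t = u at hu ⊢
  subst hpv
  have key : q * v ^ 2 * u⁻¹ + q * u - (q * v ^ 2 * v⁻¹ + q * v) = q * (u - v) ^ 2 / u := by
    field_simp
    ring
  rw [key]
  positivity

section WeightedSums

variable {E : Type*} [Fintype E] (d x : E → ℝ)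

lemma sum_mul_affine_eq (a b : ℝ) :
    ∑ e, d e * ((3 + x e) / 6 * a + (3 - x e) / 6 * b - 1) =
      ((∑ e, d e * (3 + x e)) * a + (∑ e, d e * (3 - x e)) * b) / 6 - ∑ e, d e := by
  rw [sum_mul, sum_mul, ← sum_add_distrib, sum_div, ← sum_sub_distrib]
  exact sum_congr rfl fun e _ => by ring

variable {d x}

lemma sum_le_sum_mul_three_sub (hd : ∀ e, 0 ≤ d e) (hx : ∀ e, x e ≤ 2) :
    ∑ e, d e ≤ ∑ e, d e * (3 - x e) :=
  sum_le_sum fun e _ => by nlinarith [hd e, hx e]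

lemma sum_mul_three_sub_le_sum_mul_three_add (hb : 0 ≤ ∑ e, d e * x e) :
    ∑ e, d e * (3 - x e) ≤ ∑ e, d e * (3 + x e) := by
  have h : ∑ e, d e * (3 + x e) - ∑ e, d e * (3 - x e) = 2 * ∑ e, d e * x e := by
    rw [← sum_sub_distrib, mul_sum]
    exact sum_congr rfl fun e _ => by ring
  linarith

lemma sum_mul_three_add_le_five_mul (hd : ∀ e, 0 ≤ d e) (hx : ∀ e, x e ≤ 2) :
    ∑ e, d e * (3 + x e) ≤ 5 * ∑ e, d e * (3 - x e) := by
  rw [mul_sum]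
  exact sum_le_sum fun e _ => by nlinarith [hd e, hx e]

end WeightedSums

theorem stmt_10 {E : Type*} [Fintype E] (η : ℝ) (hη : 0 < η)
    (d x : E → ℝ) (hd : ∀ e, 0 ≤ d e) (hdpos : 0 < ∑ e, d e)
    (hx : ∀ e, x e ∈ Set.Icc (-2 : ℝ) 2) (hb : 0 ≤ ∑ e, d e * x e)
    (R : ℝ → ℝ)
    (hR : R = fun α => -(1 / η) * ∑ e, d e *
      ((3 + x e) / 6 * Real.exp (-3 * η * α) +
        (3 - x e) / 6 * Real.exp (3 * η * α) - 1))
    (αstar : ℝ)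
    (hαstar : αstar = (1 / (6 * η)) *
      Real.log ((∑ e, d e * (3 + x e)) / (∑ e, d e * (3 - x e)))) :
    (∀ α : ℝ, R α ≤ R αstar) ∧ 0 ≤ αstar ∧ αstar ≤ (1 / (6 * η)) * Real.log 5 := by
  set P := ∑ e, d e * (3 + x e)
  set Q := ∑ e, d e * (3 - x e)
  have hx2 : ∀ e, x e ≤ 2 := fun e => (hx e).2
  have hQ : 0 < Q := hdpos.trans_le (sum_le_sum_mul_three_sub hd hx2)
  have hQP : Q ≤ P := sum_mul_three_sub_le_sum_mul_three_add hb
  have hP : 0 < P := hQ.trans_le hQP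
  have hR' : ∀ α, R α = (∑ e, d e - (P * exp (-(3 * η * α)) + Q * exp (3 * η * α)) / 6) / η := by
    intro α
    rw [hR]
    dsimp only
    rw [sum_mul_affine_eq]
    simp only [neg_mul]
    ring
  have hstar : 3 * η * αstar = log (P / Q) / 2 := by
    rw [hαstar]
    field_simp
    ring
  refine ⟨fun α => ?_, ?_, ?_⟩
  · rw [hR', hR', hstar]
    gcongr (_ - ?_ / 6) / _
    exact mul_exp_neg_add_mul_exp_le hP hQ _
  · rw [hαstar]
    exact mul_nonneg (by positivity) (log_nonneg ((one_le_div hQ).2 hQP))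
  · rw [hαstar]
    gcongr
    exact (div_le_iff₀ hQ).2 (by linarith [sum_mul_three_add_le_five_mul hd hx2])
end

section
/- Let d_e ≥ 0 with Σ_e d_e ≤ D and x_e ∈ [−2,2] with b := Σ_e d_e x_e ≥ 0. Then −(1/η)·[ (1/3)·√( (Σ_e d_e(3+x_e)) · (Σ_e d_e(3−x_e)) ) − Σ_e d_e ] ≥ b² / (18 η D). -/
theorem stmt_11 {E : Type*} [Fintype E] (η D : ℝ) (hη : 0 < η) (hD : 0 < D)
    (d x : E → ℝ) (hd : ∀ e, 0 ≤ d e) (hdpos : 0 < ∑ e, d e)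
    (hsum : ∑ e, d e ≤ D)
    (hx : ∀ e, x e ∈ Set.Icc (-2 : ℝ) 2)
    (b : ℝ) (hb : b = ∑ e, d e * x e) (hbnn : 0 ≤ b) :
    -(1 / η) * ((1 / 3) *
        Real.sqrt ((∑ e, d e * (3 + x e)) * (∑ e, d e * (3 - x e))) - ∑ e, d e) ≥
      b ^ 2 / (18 * η * D) := by
  set s := ∑ e, d e with hs
  have h1 : ∑ e, d e * (3 + x e) = 3 * s + b := by
    rw [hb, hs, Finset.mul_sum, ← Finset.sum_add_distrib]
    exact Finset.sum_congr rfl fun e _ => by ring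
  have h2 : ∑ e, d e * (3 - x e) = 3 * s - b := by
    rw [hb, hs, Finset.mul_sum, ← Finset.sum_sub_distrib]
    exact Finset.sum_congr rfl fun e _ => by ring
  have hble : b ≤ 2 * s := by
    rw [hb, hs, Finset.mul_sum]
    apply Finset.sum_le_sum
    intro e _
    have := (hx e).2
    nlinarith [hd e]
  have hspos : 0 < s := hdpos
  have hkey : Real.sqrt ((3 * s + b) * (3 * s - b)) ≤ 3 * s - b ^ 2 / (6 * s) := by
    have hnn : 0 ≤ 3 * s - b ^ 2 / (6 * s) := by
      rw [sub_nonneg, div_le_iff₀ (by linarith)]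
      nlinarith
    have hle : (3 * s + b) * (3 * s - b) ≤ (3 * s - b ^ 2 / (6 * s)) ^ 2 := by
      have h6 : (0:ℝ) < 6 * s := by positivity
      have hdiv : b ^ 2 / (6 * s) * (6 * s) = b ^ 2 := div_mul_cancel₀ _ h6.ne'
      nlinarith [sq_nonneg (b ^ 2 / (6 * s)), hdiv]
    calc Real.sqrt ((3 * s + b) * (3 * s - b)) ≤ Real.sqrt ((3 * s - b ^ 2 / (6 * s)) ^ 2) :=
          Real.sqrt_le_sqrt hle
      _ = 3 * s - b ^ 2 / (6 * s) := Real.sqrt_sq hnn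
  rw [h1, h2, ge_iff_le]
  have hfinal : b ^ 2 / (18 * D) ≤ s - (1 / 3) * Real.sqrt ((3 * s + b) * (3 * s - b)) := by
    have h3 : b ^ 2 / (18 * D) ≤ b ^ 2 / (18 * s) := by
      apply div_le_div_of_nonneg_left (by positivity) (by positivity) (by linarith)
    have h4 : b ^ 2 / (18 * s) ≤ s - (1 / 3) * Real.sqrt ((3 * s + b) * (3 * s - b)) := by
      have : b ^ 2 / (18 * s) = s - (1/3) * (3 * s - b ^ 2 / (6 * s)) := by
        field_simp; ring
      rw [this]
      linarith
    linarith
  have heq : -(1 / η) * ((1 / 3) * Real.sqrt ((3 * s + b) * (3 * s - b)) - s)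
      = (1 / η) * (s - (1 / 3) * Real.sqrt ((3 * s + b) * (3 * s - b))) := by ring
  rw [heq]
  calc b ^ 2 / (18 * η * D) = b ^ 2 / (18 * D) / η := by rw [div_div]; ring_nf
    _ = (1 / η) * (b ^ 2 / (18 * D)) := by rw [one_div_mul_eq_div]
    _ ≤ _ := mul_le_mul_of_nonneg_left hfinal (by positivity)
end

section
/- Suppose a nonincreasing sequence of gaps satisfies δ_{t−1} − δ_t ≥ δ_t²/(cη) for all t with c = 18D, and that δ_1 ≤ D and cη/δ_1 > 1 when η = (4/ε)·D·max(1, ln(1/ν)). If δ_t > ε/2 for all t < T (stopping criterion), then T ≤ (144/ε²)·D²·max(1, ln(1/ν)). -/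
set_option maxHeartbeats 1000000 in
theorem stmt_12 (ε ν D η c : ℝ) (δ : ℕ → ℝ) (T : ℕ)
    (hε : 0 < ε) (hε1 : ε ≤ 1) (hν0 : 0 < ν) (hν1 : ν ≤ 1) (hD : 1 ≤ D)
    (hη : η = (4 / ε) * D * max 1 (Real.log (1 / ν)))
    (hc : c = 18 * D)
    (hpos : ∀ t, 1 ≤ t → 0 < δ t)
    (hmono : ∀ t, 1 ≤ t → δ (t + 1) ≤ δ t)
    (hrec : ∀ t, 2 ≤ t → δ (t - 1) - δ t ≥ (δ t) ^ 2 / (c * η))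
    (hδ1 : δ 1 ≤ D)
    (hgt1 : c * η / δ 1 > 1)
    (hstop : ∀ t, 1 ≤ t → t < T → ε / 2 < δ t) :
    (T : ℝ) ≤ (144 / ε ^ 2) * D ^ 2 * max 1 (Real.log (1 / ν)) := by
  set M := max 1 (Real.log (1 / ν)) with hMdef
  have hM1 : (1 : ℝ) ≤ M := le_max_left _ _
  have hDpos : (0 : ℝ) < D := lt_of_lt_of_le one_pos hD
  set A := c * η with hAdef
  have hA : A = 72 * D ^ 2 * M / ε := by
    rw [hAdef, hη, hc]; field_simp; ring
  have hApos : 0 < A := by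
    rw [hA]; positivity
  set a := δ 1 with hadef
  have ha : 0 < a := hpos 1 le_rfl
  have haA : 0 < A + a := by linarith
  clear_value M A a
  -- δ t ≤ δ 1 for t ≥ 1
  have hle1 : ∀ t, 1 ≤ t → δ t ≤ a := by
    intro t ht
    induction t with
    | zero => omega
    | succ n ih =>
      rcases Nat.lt_or_ge 1 (n + 1) with h | h
      · have hn : 1 ≤ n := by omega
        exact (hmono n hn).trans (ih hn)
      · have hn1 : n + 1 = 1 := by omega
        rw [hn1]
        exact le_of_eq hadef.symm
  -- telescoping lower bound on 1/δ n
  have key : ∀ n : ℕ, 1 ≤ n → 1 / a + ((n : ℝ) - 1) / (A + a) ≤ 1 / δ n := by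
    intro n hn
    induction n with
    | zero => omega
    | succ m ih =>
      rcases Nat.lt_or_ge 1 (m + 1) with h | h
      · have hm : 1 ≤ m := by omega
        have hpm : 0 < δ m := hpos m hm
        have hpm1 : 0 < δ (m + 1) := hpos (m + 1) (by omega)
        have hlem1 : δ (m + 1) ≤ a := hle1 (m + 1) (by omega)
        have hgap : δ m - δ (m + 1) ≥ δ (m + 1) ^ 2 / A := by
          have := hrec (m + 1) (by omega)
          simpa using this
        have hgap' : δ (m + 1) ^ 2 / A * A ≤ (δ m - δ (m + 1)) * A :=
          mul_le_mul_of_nonneg_right hgap hApos.le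
        rw [div_mul_cancel₀ _ (ne_of_gt hApos)] at hgap'
        have hg0 : 0 ≤ δ m - δ (m + 1) := by nlinarith
        have hkey : δ (m + 1) ^ 2 ≤ (δ m - δ (m + 1)) * (A + a - δ (m + 1)) := by
          nlinarith
        -- step: 1/(A+a) ≤ 1/δ(m+1) - 1/δ m
        have step : 1 / (A + a) ≤ 1 / δ (m + 1) - 1 / δ m := by
          rw [div_sub_div _ _ (ne_of_gt hpm1) (ne_of_gt hpm),
            div_le_div_iff₀ haA (by positivity)]
          nlinarith
        have ihm := ih hm
        have : 1 / a + ((m : ℝ) - 1) / (A + a) + 1 / (A + a) ≤ 1 / δ (m + 1) := by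
          linarith
        push_cast
        have heq : ((m : ℝ) + 1 - 1) / (A + a)
            = ((m : ℝ) - 1) / (A + a) + 1 / (A + a) := by ring
        rw [heq]; linarith
      · have hm0 : m = 0 := by omega
        subst hm0
        rw [show ((0:ℕ)+1) = 1 from rfl, ← hadef]
        norm_num
  -- main argument
  have hRHS : (144 / ε ^ 2) * D ^ 2 * M = 2 * A / ε := by
    rw [hA]; field_simp; ring
  rw [hRHS, le_div_iff₀ hε]
  rcases Nat.lt_or_ge T 2 with hT2 | hT2
  · -- T ≤ 1
    have : (T : ℝ) ≤ 1 := by exact_mod_cast Nat.lt_succ_iff.mp hT2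
    have h72 : (72 : ℝ) ≤ A * ε := by
      rw [hA]
      have : 72 * D ^ 2 * M / ε * ε = 72 * D ^ 2 * M := by field_simp
      rw [this]; nlinarith
    nlinarith
  · -- T ≥ 2
    have hT1 : 1 ≤ T - 1 := by omega
    have hstopT := hstop (T - 1) hT1 (by omega)
    have hkeyT := key (T - 1) hT1
    have hcast : ((T - 1 : ℕ) : ℝ) = (T : ℝ) - 1 := by
      have : (1 : ℕ) ≤ T := by omega
      push_cast [Nat.cast_sub this]; ring
    rw [hcast] at hkeyT
    have hδT : 0 < δ (T - 1) := hpos _ hT1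
    have hinv : 1 / δ (T - 1) < 2 / ε := by
      rw [div_lt_div_iff₀ hδT hε]
      nlinarith
    have h1 : 1 / a + ((T : ℝ) - 1 - 1) / (A + a) < 2 / ε := lt_of_le_of_lt hkeyT hinv
    -- clear denominators
    rw [div_add_div _ _ (ne_of_gt ha) (ne_of_gt haA), div_lt_div_iff₀ (by positivity) hε] at h1
    -- A is big: ε*a + 2*a^2 ≤ ε*A
    have hAa : ε * a + 2 * a ^ 2 ≤ ε * A := by
      have hεA : ε * A = 72 * D ^ 2 * M := by
        rw [hA]; field_simp
      rw [hεA]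
      nlinarith
    nlinarith [mul_pos ha hε, mul_pos haA ha]
end
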